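/- arXiv:2509.01859 — 2 statements merged into one kernel-verified Lean document; each statement's English description precedes it below -/
import Mathlib

section
/- Every element of the group P₃ generated by diag(i,1), diag(j,1), (1/√2)·[[1,1],[1,−1]] maps each of the ten MUB lines (spanned by (1,0),(0,1),(1,±1),(1,±i),(1,±j),(1,±k)) to one of the ten MUB lines; i.e., P₃ is a group of symmetries of the ten MUB lines. -/
/-! The matrices sending every line of a family to a line of the same family form a monoid, so it
suffices to check the three generators. The ten lines are those of `(1, 0)`, `(0, 1)` and `(1, p)`
with `p` in the quaternion group `Q₈ = {±1, ±i, ±j, ±k}`. The matrix `diag(q, 1)` fixes the first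
two lines and sends `(1, p)` to `(q, p) = (1, p q⁻¹) q`, which is again a MUB line since `Q₈` is a
group. The Hadamard matrix exchanges the lines of `(1, 0), (0, 1)` with those of `(1, 1), (1, -1)`,
and for `p² = -1` it sends `(1, p)` to `(1 + p, 1 - p) = (1, -p) (1 + p)`. -/

noncomputable section
open Quaternion Matrix

abbrev HQ := ℍ[ℝ]
def qi : HQ := ⟨0,1,0,0⟩
def qj : HQ := ⟨0,0,1,0⟩
def qk : HQ := ⟨0,0,0,1⟩

/-- Inner product on the right ℍ-module ℍ^d. -/
def inprod {d : ℕ} (v w : Fin d → HQ) : HQ := ∑ m, star (v m) * w m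


/-- The ten MUB vectors (1,0), (0,1), (1,q) for q ∈ {±1,±i,±j,±k}. -/
def mubVec : Fin 10 → (Fin 2 → HQ) :=
  ![![1, 0], ![0, 1], ![1, 1], ![1, -1], ![1, qi], ![1, -qi],
    ![1, qj], ![1, -qj], ![1, qk], ![1, -qk]]

section Lines

variable {R : Type*} [Ring R] {n ι : Type*} [Fintype n]

def MapsLineTo (g : Matrix n n R) (v w : n → R) : Prop :=
  ∃ lam : R, lam ≠ 0 ∧ g *ᵥ v = fun m => w m * lam

theorem mapsLineTo_one [Nontrivial R] [DecidableEq n] (v : n → R) : MapsLineTo 1 v v :=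
  ⟨1, one_ne_zero, by simp⟩

theorem MapsLineTo.mul [NoZeroDivisors R] {g h : Matrix n n R} {u v w : n → R}
    (hg : MapsLineTo g v w) (hh : MapsLineTo h u v) : MapsLineTo (g * h) u w := by
  obtain ⟨lam, hlam, hu⟩ := hh
  obtain ⟨mu, hmu, hv⟩ := hg
  refine ⟨mu * lam, mul_ne_zero hmu hlam, ?_⟩
  rw [← mulVec_mulVec, hu]
  -- right multiplication by `lam` is the action of `MulOpposite.op lam`, which commutes with `g`
  change g *ᵥ (MulOpposite.op lam • v) = _
  rw [mulVec_smul, hv]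
  ext m
  simp [mul_assoc]

def lineSymmetries [IsDomain R] [DecidableEq n] (v : ι → n → R) : Submonoid (Matrix n n R) where
  carrier := {g | ∀ a, ∃ b, MapsLineTo g (v a) (v b)}
  one_mem' a := ⟨a, mapsLineTo_one (v a)⟩
  mul_mem' hg hh a :=
    let ⟨b, hb⟩ := hh a
    let ⟨c, hc⟩ := hg b
    ⟨c, hc.mul hb⟩

end Lines

section TwoByTwo

variable {K : Type*} [DivisionRing K]

theorem mulVec_diag_one (q x y : K) : !![q, 0; 0, 1] *ᵥ ![x, y] = ![q * x, y] := by
  funext i; fin_cases i <;> simp [mulVec, dotProduct]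

theorem mapsLineTo_diag_one_vec_one_zero {q : K} (hq : q ≠ 0) :
    MapsLineTo !![q, 0; 0, 1] ![1, 0] ![1, 0] :=
  ⟨q, hq, by rw [mulVec_diag_one]; funext i; fin_cases i <;> simp⟩

theorem mapsLineTo_diag_one_vec_zero_one (q : K) : MapsLineTo !![q, 0; 0, 1] ![0, 1] ![0, 1] :=
  ⟨1, one_ne_zero, by rw [mulVec_diag_one]; funext i; fin_cases i <;> simp⟩

theorem mapsLineTo_diag_one_vec_one {q : K} (hq : q ≠ 0) (p : K) :
    MapsLineTo !![q, 0; 0, 1] ![1, p] ![1, p * q⁻¹] :=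
  ⟨q, hq, by rw [mulVec_diag_one]; funext i; fin_cases i <;> simp [hq]⟩

end TwoByTwo

@[simp] theorem qi_re : qi.re = 0 := rfl
@[simp] theorem qi_imI : qi.imI = 1 := rfl
@[simp] theorem qi_imJ : qi.imJ = 0 := rfl
@[simp] theorem qi_imK : qi.imK = 0 := rfl
@[simp] theorem qj_re : qj.re = 0 := rfl
@[simp] theorem qj_imI : qj.imI = 0 := rfl
@[simp] theorem qj_imJ : qj.imJ = 1 := rfl
@[simp] theorem qj_imK : qj.imK = 0 := rfl
@[simp] theorem qk_re : qk.re = 0 := rfl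
@[simp] theorem qk_imI : qk.imI = 0 := rfl
@[simp] theorem qk_imJ : qk.imJ = 0 := rfl
@[simp] theorem qk_imK : qk.imK = 1 := rfl

theorem qi_mul_qi : qi * qi = -1 := by ext <;> simp
theorem qj_mul_qj : qj * qj = -1 := by ext <;> simp
theorem qk_mul_qk : qk * qk = -1 := by ext <;> simp
theorem qi_mul_qj : qi * qj = qk := by ext <;> simp
theorem qj_mul_qi : qj * qi = -qk := by ext <;> simp
theorem qk_mul_qi : qk * qi = qj := by ext <;> simp
theorem qk_mul_qj : qk * qj = -qi := by ext <;> simp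

theorem qi_inv : qi⁻¹ = -qi := inv_eq_of_mul_eq_one_right (by rw [mul_neg, qi_mul_qi, neg_neg])
theorem qj_inv : qj⁻¹ = -qj := inv_eq_of_mul_eq_one_right (by rw [mul_neg, qj_mul_qj, neg_neg])

def quaternionGroup : Set HQ := {1, -1, qi, -qi, qj, -qj, qk, -qk}

theorem neg_mem_quaternionGroup {p : HQ} (hp : p ∈ quaternionGroup) : -p ∈ quaternionGroup := by
  simp only [quaternionGroup, Set.mem_insert_iff, Set.mem_singleton_iff] at hp ⊢
  rcases hp with rfl | rfl | rfl | rfl | rfl | rfl | rfl | rfl <;> simp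

theorem mul_inv_mem_quaternionGroup {p q : HQ} (hp : p ∈ quaternionGroup) (hq : q = qi ∨ q = qj) :
    p * q⁻¹ ∈ quaternionGroup := by
  simp only [quaternionGroup, Set.mem_insert_iff, Set.mem_singleton_iff] at hp ⊢
  rcases hq with rfl | rfl <;> rcases hp with rfl | rfl | rfl | rfl | rfl | rfl | rfl | rfl <;>
    simp [qi_inv, qj_inv, qi_mul_qi, qj_mul_qj, qi_mul_qj, qj_mul_qi, qk_mul_qi, qk_mul_qj]

theorem eq_one_or_eq_neg_one_or_mul_self_of_mem_quaternionGroup {p : HQ}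
    (hp : p ∈ quaternionGroup) : p = 1 ∨ p = -1 ∨ p * p = -1 := by
  simp only [quaternionGroup, Set.mem_insert_iff, Set.mem_singleton_iff] at hp
  rcases hp with rfl | rfl | rfl | rfl | rfl | rfl | rfl | rfl <;>
    simp [qi_mul_qi, qj_mul_qj, qk_mul_qk]

theorem mubVec_cases (a : Fin 10) :
    mubVec a = ![1, 0] ∨ mubVec a = ![0, 1] ∨ ∃ p ∈ quaternionGroup, mubVec a = ![1, p] := by
  fin_cases a <;> simp [mubVec, quaternionGroup]

theorem exists_mubVec_eq_vec_one {p : HQ} (hp : p ∈ quaternionGroup) : ∃ b, mubVec b = ![1, p] := by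
  simp only [quaternionGroup, Set.mem_insert_iff, Set.mem_singleton_iff] at hp
  rcases hp with rfl | rfl | rfl | rfl | rfl | rfl | rfl | rfl
  exacts [⟨2, rfl⟩, ⟨3, rfl⟩, ⟨4, rfl⟩, ⟨5, rfl⟩, ⟨6, rfl⟩, ⟨7, rfl⟩, ⟨8, rfl⟩, ⟨9, rfl⟩]

theorem mem_lineSymmetries_mubVec {g : Matrix (Fin 2) (Fin 2) HQ}
    (h₀ : ∃ b, MapsLineTo g ![1, 0] (mubVec b)) (h₁ : ∃ b, MapsLineTo g ![0, 1] (mubVec b))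
    (h : ∀ p ∈ quaternionGroup, ∃ b, MapsLineTo g ![1, p] (mubVec b)) :
    g ∈ lineSymmetries mubVec := by
  intro a
  rcases mubVec_cases a with ha | ha | ⟨p, hp, ha⟩ <;> rw [ha]
  exacts [h₀, h₁, h p hp]

theorem diag_one_mem_lineSymmetries_mubVec {q : HQ} (hq : q = qi ∨ q = qj) :
    !![q, 0; 0, 1] ∈ lineSymmetries mubVec := by
  have hq₀ : q ≠ 0 := by rcases hq with rfl | rfl <;> simp [Quaternion.ext_iff]
  refine mem_lineSymmetries_mubVec ⟨0, mapsLineTo_diag_one_vec_one_zero hq₀⟩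
    ⟨1, mapsLineTo_diag_one_vec_zero_one q⟩ fun p hp => ?_
  obtain ⟨b, hb⟩ := exists_mubVec_eq_vec_one (mul_inv_mem_quaternionGroup hp hq)
  exact ⟨b, hb ▸ mapsLineTo_diag_one_vec_one hq₀ p⟩

def scaledHadamard (r : ℝ) : Matrix (Fin 2) (Fin 2) HQ := (r : HQ) • !![1, 1; 1, -1]

theorem scaledHadamard_mulVec (r : ℝ) (x y : HQ) :
    scaledHadamard r *ᵥ ![x, y] = ![r * (x + y), r * (x - y)] := by
  funext i; fin_cases i <;> simp [scaledHadamard, mulVec, dotProduct, mul_add, sub_eq_add_neg]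

section Hadamard

variable {r : ℝ}

theorem mapsLineTo_scaledHadamard_vec_one_zero (hr : r ≠ 0) :
    MapsLineTo (scaledHadamard r) ![1, 0] ![1, 1] :=
  ⟨r, by simpa [Quaternion.ext_iff] using hr, by
    rw [scaledHadamard_mulVec]; funext i; fin_cases i <;> simp⟩

theorem mapsLineTo_scaledHadamard_vec_zero_one (hr : r ≠ 0) :
    MapsLineTo (scaledHadamard r) ![0, 1] ![1, -1] :=
  ⟨r, by simpa [Quaternion.ext_iff] using hr, by
    rw [scaledHadamard_mulVec]; funext i; fin_cases i <;> simp⟩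

theorem mapsLineTo_scaledHadamard_vec_one_one (hr : r ≠ 0) :
    MapsLineTo (scaledHadamard r) ![1, 1] ![1, 0] :=
  ⟨(r + r : ℝ), by simpa [Quaternion.ext_iff] using hr, by
    rw [scaledHadamard_mulVec]; funext i; fin_cases i <;> simp [mul_add]⟩

theorem mapsLineTo_scaledHadamard_vec_one_neg_one (hr : r ≠ 0) :
    MapsLineTo (scaledHadamard r) ![1, -1] ![0, 1] :=
  ⟨(r + r : ℝ), by simpa [Quaternion.ext_iff] using hr, by
    rw [scaledHadamard_mulVec]; funext i; fin_cases i <;> simp [mul_add]⟩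

theorem mapsLineTo_scaledHadamard_vec_one_of_mul_self (hr : r ≠ 0) {p : HQ} (hp : p * p = -1) :
    MapsLineTo (scaledHadamard r) ![1, p] ![1, -p] := by
  have h₁ : (1 + p : HQ) ≠ 0 := by
    intro h
    rw [← neg_eq_of_add_eq_zero_right h, neg_mul_neg, one_mul] at hp
    norm_num [Quaternion.ext_iff] at hp
  have h₂ : -p * (1 + p) = 1 - p := by rw [neg_mul, mul_add, mul_one, hp]; abel
  refine ⟨r * (1 + p), mul_ne_zero (by simpa [Quaternion.ext_iff] using hr) h₁, ?_⟩
  rw [scaledHadamard_mulVec]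
  funext i; fin_cases i
  · simp
  · simp [← h₂, ← mul_assoc, (Quaternion.coe_commutes r p).symm]

end Hadamard

theorem scaledHadamard_mem_lineSymmetries_mubVec {r : ℝ} (hr : r ≠ 0) :
    scaledHadamard r ∈ lineSymmetries mubVec := by
  refine mem_lineSymmetries_mubVec ⟨2, mapsLineTo_scaledHadamard_vec_one_zero hr⟩
    ⟨3, mapsLineTo_scaledHadamard_vec_zero_one hr⟩ fun p hp => ?_
  rcases eq_one_or_eq_neg_one_or_mul_self_of_mem_quaternionGroup hp with rfl | rfl | hp'
  · exact ⟨0, mapsLineTo_scaledHadamard_vec_one_one hr⟩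
  · exact ⟨1, mapsLineTo_scaledHadamard_vec_one_neg_one hr⟩
  · obtain ⟨b, hb⟩ := exists_mubVec_eq_vec_one (neg_mem_quaternionGroup hp)
    exact ⟨b, hb ▸ mapsLineTo_scaledHadamard_vec_one_of_mul_self hr hp'⟩

/-- Every element of P₃ maps each of the ten MUB lines to a MUB line. -/
theorem P3_symmetries_of_MUB_lines :
    ∀ g ∈ Submonoid.closure
      {(!![qi, 0; 0, 1] : Matrix (Fin 2) (Fin 2) HQ), !![qj, 0; 0, 1],
       (((Real.sqrt 2)⁻¹ : ℝ) : HQ) • !![1, 1; 1, -1]},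
      ∀ a : Fin 10, ∃ b : Fin 10, ∃ lam : HQ, lam ≠ 0 ∧
        g.mulVec (mubVec a) = fun m => mubVec b m * lam := by
  intro g hg
  suffices hle : Submonoid.closure _ ≤ lineSymmetries mubVec from hle hg
  rw [Submonoid.closure_le]
  rintro _ (rfl | rfl | rfl)
  · exact diag_one_mem_lineSymmetries_mubVec (.inl rfl)
  · exact diag_one_mem_lineSymmetries_mubVec (.inr rfl)
  · exact scaledHadamard_mem_lineSymmetries_mubVec (by positivity)
end
end

section
/- The ten MUB unit vectors v₁,…,v₁₀ in ℍ² form a spherical (3,3)-design: Σⱼ Σₖ |⟨vⱼ,vₖ⟩|⁶ = c₃(ℍ²)·100, where c₃(ℍ²) = 6/(2·5·3) = 1/5; equivalently Σⱼ Σₖ |⟨vⱼ,vₖ⟩|⁶ = 20. -/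
noncomputable section
open Quaternion Matrix

/-- The ten MUB unit vectors e₁, e₂, (1/√2)(1,q), q ∈ {±1,±i,±j,±k}. -/
def mubUnit : Fin 10 → (Fin 2 → HQ) :=
  ![![1, 0], ![0, 1],
    (Real.sqrt 2)⁻¹ • ![1, 1], (Real.sqrt 2)⁻¹ • ![1, -1],
    (Real.sqrt 2)⁻¹ • ![1, qi], (Real.sqrt 2)⁻¹ • ![1, -qi],
    (Real.sqrt 2)⁻¹ • ![1, qj], (Real.sqrt 2)⁻¹ • ![1, -qj],
    (Real.sqrt 2)⁻¹ • ![1, qk], (Real.sqrt 2)⁻¹ • ![1, -qk]]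

/-!
The ten vectors are five orthonormal bases of `ℍ²`: the standard one and `{(1, ±q)/√2}` for
`q ∈ {1, i, j, k}`. Any two of these bases are mutually unbiased, `|⟨v, w⟩|² = 1/2`, because
`|1 + p̄q|² = 2 + 2 Re(p̄q)` for unit `p, q` and `1, i, j, k` are orthonormal for `Re(p̄q)`.
So every row of the sum contributes `1 + 0 + 8 · (1/2)³ = 2`.
-/

lemma inprod_fin_two (v w : Fin 2 → HQ) : inprod v w = star (v 0) * w 0 + star (v 1) * w 1 :=
  Fin.sum_univ_two _

lemma star_inprod {d : ℕ} (v w : Fin d → HQ) : star (inprod v w) = inprod w v := by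
  simp [inprod, star_sum]

lemma inprod_single_one_left {d : ℕ} (i : Fin d) (w : Fin d → HQ) :
    inprod (Pi.single i 1) w = w i := by
  simp [inprod, Pi.single_apply, apply_ite star]

lemma inprod_smul_smul {d : ℕ} (r s : ℝ) (v w : Fin d → HQ) :
    inprod (r • v) (s • w) = (r * s) • inprod v w := by
  simp only [inprod, Finset.smul_sum, Pi.smul_apply, Quaternion.star_smul, smul_mul_smul_comm]

lemma Quaternion.normSq_one_add_of_normSq_eq_one {R : Type*} [CommRing R] {x : ℍ[R]}
    (hx : normSq x = 1) : normSq (1 + x) = 2 * (1 + x.re) := by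
  rw [normSq_add, hx]
  simp
  ring

lemma normSq_inprod_single_unbiased (i : Fin 2) {q : HQ} (hq : normSq q = 1) :
    normSq (inprod (Pi.single i 1) ((√2)⁻¹ • ![1, q])) = 1 / 2 := by
  rw [inprod_single_one_left, Pi.smul_apply, normSq_smul, inv_pow, Real.sq_sqrt zero_le_two]
  fin_cases i <;> simp [hq]

lemma normSq_inprod_unbiased_unbiased {p q : HQ} (hp : normSq p = 1) (hq : normSq q = 1) :
    normSq (inprod ((√2)⁻¹ • ![1, p]) ((√2)⁻¹ • ![1, q])) = (1 + (star p * q).re) / 2 := by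
  have hpq : normSq (star p * q) = 1 := by simp [hp, hq]
  have hscale : (√2)⁻¹ * (√2)⁻¹ = (1 / 2 : ℝ) := by
    rw [← mul_inv, Real.mul_self_sqrt zero_le_two, one_div]
  rw [inprod_smul_smul, normSq_smul, inprod_fin_two, hscale]
  simp only [Matrix.cons_val_zero, Matrix.cons_val_one, star_one, one_mul]
  rw [normSq_one_add_of_normSq_eq_one hpq]
  ring

/-- `v (m, i)` is the `i`-th vector of the `m`-th basis of a family of orthonormal bases of `ℍ^d`,
any two of which are unbiased. -/
def IsMutuallyUnbiased {ι : Type*} [DecidableEq ι] {d : ℕ} (v : ι × Fin d → Fin d → HQ) : Prop :=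
  ∀ x y, normSq (inprod (v x) (v y)) =
    if x.1 = y.1 then (if x.2 = y.2 then 1 else 0) else 1 / (d : ℝ)

lemma sum_mutuallyUnbiasedGram_pow {ι : Type*} [Fintype ι] [DecidableEq ι] {d t : ℕ} (ht : t ≠ 0)
    (c : ℝ) (x : ι × Fin d) :
    ∑ y : ι × Fin d, (if x.1 = y.1 then (if x.2 = y.2 then 1 else 0) else c) ^ t =
      1 + (Fintype.card ι - 1) * d * c ^ t := by
  rw [Fintype.sum_prod_type, Fintype.sum_eq_add_sum_compl x.1]
  have hsame : ∑ i : Fin d, (if x.2 = i then (1 : ℝ) else 0) ^ t = 1 := by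
    simp [ite_pow, zero_pow ht]
  have hother : ∀ m ∈ ({x.1}ᶜ : Finset ι),
      ∑ i : Fin d, (if x.1 = m then (if x.2 = i then 1 else 0) else c) ^ t = d * c ^ t := by
    intro m hm
    rw [Finset.mem_compl, Finset.mem_singleton] at hm
    simp [Ne.symm hm]
  have hcard : ((Fintype.card ι - 1 : ℕ) : ℝ) = Fintype.card ι - 1 :=
    Nat.cast_pred (Fintype.card_pos_iff.mpr ⟨x.1⟩)
  rw [Finset.sum_congr rfl hother, Finset.sum_const, Finset.card_compl, Finset.card_singleton,
    nsmul_eq_mul, hcard]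
  simp only [↓reduceIte, hsame]
  ring

theorem IsMutuallyUnbiased.sum_sum_normSq_inprod_pow {ι : Type*} [Fintype ι] [DecidableEq ι]
    {d : ℕ} {v : ι × Fin d → Fin d → HQ} (hv : IsMutuallyUnbiased v) {t : ℕ} (ht : t ≠ 0) :
    ∑ x, ∑ y, normSq (inprod (v x) (v y)) ^ t =
      Fintype.card ι * d * (1 + (Fintype.card ι - 1) * d * (1 / d) ^ t) := by
  rw [IsMutuallyUnbiased] at hv
  simp only [hv, sum_mutuallyUnbiasedGram_pow ht, Finset.sum_const, Finset.card_univ,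
    Fintype.card_prod, Fintype.card_fin, nsmul_eq_mul, Nat.cast_mul]

lemma qi_coords : qi.re = 0 ∧ qi.imI = 1 ∧ qi.imJ = 0 ∧ qi.imK = 0 := ⟨rfl, rfl, rfl, rfl⟩

lemma qj_coords : qj.re = 0 ∧ qj.imI = 0 ∧ qj.imJ = 1 ∧ qj.imK = 0 := ⟨rfl, rfl, rfl, rfl⟩

lemma qk_coords : qk.re = 0 ∧ qk.imI = 0 ∧ qk.imJ = 0 ∧ qk.imK = 1 := ⟨rfl, rfl, rfl, rfl⟩

def mubPhase : Fin 4 → HQ := ![1, qi, qj, qk]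

lemma re_star_mul_mubPhase (m m' : Fin 4) :
    (star (mubPhase m) * mubPhase m').re = if m = m' then 1 else 0 := by
  fin_cases m <;> fin_cases m' <;>
    simp [mubPhase, Quaternion.re_mul, qi_coords, qj_coords, qk_coords]

lemma normSq_sign_smul_mubPhase (i : Fin 2) (m : Fin 4) :
    normSq ((-1 : ℝ) ^ (i : ℕ) • mubPhase m) = 1 := by
  have h : normSq (mubPhase m) = 1 := by
    simpa [Quaternion.star_mul_self] using re_star_mul_mubPhase m m
  fin_cases i <;> simp [h]

lemma mubUnit_finProdFinEquiv_zero (i : Fin 2) :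
    mubUnit (finProdFinEquiv ((0 : Fin 5), i) : Fin 10) = Pi.single i 1 := by
  fin_cases i <;> ext j <;> fin_cases j <;> simp [finProdFinEquiv, mubUnit]

lemma mubUnit_finProdFinEquiv_succ (m : Fin 4) (i : Fin 2) :
    mubUnit (finProdFinEquiv (m.succ, i) : Fin 10) =
      (√2)⁻¹ • ![1, (-1 : ℝ) ^ (i : ℕ) • mubPhase m] := by
  fin_cases m <;> fin_cases i <;> simp [finProdFinEquiv, mubUnit, mubPhase]

theorem isMutuallyUnbiased_mubUnit :
    IsMutuallyUnbiased (fun x : Fin 5 × Fin 2 => mubUnit (finProdFinEquiv x : Fin 10)) := by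
  rintro ⟨m, i⟩ ⟨m', i'⟩
  dsimp only
  obtain rfl | ⟨m, rfl⟩ : m = 0 ∨ ∃ m₀ : Fin 4, m = m₀.succ := Fin.eq_zero_or_eq_succ m <;>
    obtain rfl | ⟨m', rfl⟩ : m' = 0 ∨ ∃ m₀ : Fin 4, m' = m₀.succ := Fin.eq_zero_or_eq_succ m'
  · rw [mubUnit_finProdFinEquiv_zero, mubUnit_finProdFinEquiv_zero, inprod_single_one_left]
    simp [Pi.single_apply]
  · rw [mubUnit_finProdFinEquiv_zero, mubUnit_finProdFinEquiv_succ,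
      normSq_inprod_single_unbiased _ (normSq_sign_smul_mubPhase _ _)]
    simp [(Fin.succ_ne_zero _).symm]
  · rw [← normSq_star, star_inprod, mubUnit_finProdFinEquiv_zero, mubUnit_finProdFinEquiv_succ,
      normSq_inprod_single_unbiased _ (normSq_sign_smul_mubPhase _ _)]
    simp [Fin.succ_ne_zero]
  · rw [mubUnit_finProdFinEquiv_succ, mubUnit_finProdFinEquiv_succ,
      normSq_inprod_unbiased_unbiased (normSq_sign_smul_mubPhase _ _)
        (normSq_sign_smul_mubPhase _ _),
      Quaternion.star_smul, smul_mul_smul_comm, Quaternion.re_smul, re_star_mul_mubPhase]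
    simp only [Fin.succ_inj]
    split_ifs <;> fin_cases i <;> fin_cases i' <;> norm_num at *

/-- The ten MUB unit vectors form a spherical (3,3)-design for ℍ²:
Σⱼₖ |⟨vⱼ,vₖ⟩|⁶ = c₃(ℍ²)·10² = (1/5)·100 = 20. -/
theorem MUBs_are_spherical_33_design :
    ∑ a : Fin 10, ∑ b : Fin 10,
      (Quaternion.normSq (inprod (mubUnit a) (mubUnit b))) ^ 3 = 20 := by
  have hsum := isMutuallyUnbiased_mubUnit.sum_sum_normSq_inprod_pow three_ne_zero
  let e : Fin 5 × Fin 2 ≃ Fin 10 := finProdFinEquiv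
  rw [← e.sum_comp]
  simp_rw [← e.sum_comp (fun b => normSq (inprod (mubUnit _) (mubUnit b)) ^ 3)]
  rw [hsum]
  norm_num
end
end
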